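/- Let M be an NFA over Σ with all states final, single initial state, accepting ε, such that the shortest word not in L(M) is w of length N. Form M' over Σ ∪ {#} by adding transitions on # from every final state of M to the initial state and making all states final. Then L(M') ≠ (Σ ∪ {#})*, yet every word over Σ ∪ {#} of length less than N is accepted by M'; in particular the shortest word not accepted by M' has length at least N. -/

import Mathlib

/-!
When every state is final, a word is accepted exactly when the set of states reached on it is
nonempty. Reading `#` (encoded as `none`) from a nonempty set of states lands in the start set,
so a run of `M'` on `v` ends in the same states as the run of `M` on the `#`-free tail of `v`,
as long as each `#`-free block read so far is shorter than `w` and hence has a nonempty run in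
`M`.
Conversely `M'` restricted to `Σ` is `M`, so `w` itself is still rejected.
-/

namespace NFA

variable {α σ : Type*}

theorem mem_accepts_iff_eval_nonempty {M : NFA α σ} (hacc : M.accept = Set.univ) {x : List α} :
    x ∈ M.accepts ↔ (M.eval x).Nonempty := by
  simp [mem_accepts, hacc, eval, Set.Nonempty]

theorem stepSet_eq_of_forall_step_eq {M : NFA α σ} {a : α} {T S : Set σ}
    (h : ∀ q, M.step q a = T) (hS : S.Nonempty) : M.stepSet S a = T := by
  ext r
  simp only [mem_stepSet, h]
  exact ⟨fun ⟨_, _, hr⟩ => hr, fun hr => ⟨hS.some, hS.some_mem, hr⟩⟩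

section OptionExtension

variable {M : NFA α σ} {M' : NFA (Option α) σ}

theorem evalFrom_map_some (hstep : ∀ q a, M'.step q (some a) = M.step q a) (S : Set σ)
    (u : List α) : M'.evalFrom S (u.map some) = M.evalFrom S u := by
  induction u generalizing S with
  | nil => rfl
  | cons a u ih =>
    simp only [List.map_cons, evalFrom_cons, stepSet, hstep]
    exact ih _

theorem eval_map_some (hstep : ∀ q a, M'.step q (some a) = M.step q a)
    (hstart : M'.start = M.start) (u : List α) : M'.eval (u.map some) = M.eval u := by
  rw [eval, eval, hstart, evalFrom_map_some hstep]

theorem exists_eval_eq_of_length_lt (hstep : ∀ q a, M'.step q (some a) = M.step q a)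
    (hsharp : ∀ q, M'.step q none = M.start) (hstart : M'.start = M.start) {n : ℕ}
    (hlive : ∀ u : List α, u.length < n → (M.eval u).Nonempty) :
    ∀ v : List (Option α), v.length < n →
      ∃ u : List α, u.length ≤ v.length ∧ M'.eval v = M.eval u := by
  intro v
  induction v using List.reverseRecOn with
  | nil => exact fun _ => ⟨[], le_rfl, hstart⟩
  | append_singleton v a ih =>
    intro hlen
    rw [List.length_append, List.length_singleton] at hlen
    obtain ⟨u, hu, heq⟩ := ih (by omega)
    cases a with
    | none =>
      refine ⟨[], Nat.zero_le _, ?_⟩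
      rw [eval_append_singleton, heq]
      exact stepSet_eq_of_forall_step_eq hsharp (hlive u (by omega))
    | some a =>
      refine ⟨u ++ [a], by simp only [List.length_append, List.length_singleton]; omega, ?_⟩
      simp only [eval_append_singleton, heq, stepSet, hstep]

end OptionExtension

end NFA

open NFA in
theorem shortest_rejected_word_construction_general {α σ : Type} (M : NFA α σ) (q₀ : σ)
    (hstart : M.start = {q₀}) (hacc : M.accept = Set.univ)
    (w : List α) (hw : w ∉ M.accepts)
    (hmin : ∀ v : List α, v.length < w.length → v ∈ M.accepts)
    (M' : NFA (Option α) σ)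
    (hstep : ∀ q a, M'.step q (some a) = M.step q a)
    (hsharp : ∀ q, M'.step q none = {q₀})
    (hstart' : M'.start = {q₀}) (hacc' : M'.accept = Set.univ) :
    M'.accepts ≠ ⊤ ∧
      ∀ v : List (Option α), v.length < w.length → v ∈ M'.accepts := by
  have hstart'' : M'.start = M.start := hstart'.trans hstart.symm
  refine ⟨fun htop => hw ?_, fun v hv => ?_⟩
  · rw [mem_accepts_iff_eval_nonempty hacc, ← eval_map_some hstep hstart'',
      ← mem_accepts_iff_eval_nonempty hacc', htop]
    trivial
  · obtain ⟨u, hu, heq⟩ := exists_eval_eq_of_length_lt hstep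
      (fun q => (hsharp q).trans hstart.symm) hstart''
      (fun u hu => (mem_accepts_iff_eval_nonempty hacc).1 (hmin u hu)) v hv
    rw [mem_accepts_iff_eval_nonempty hacc', heq, ← mem_accepts_iff_eval_nonempty hacc]
    exact hmin u (hu.trans_lt hv)

theorem shortest_rejected_word_construction {α σ : Type} (M : NFA α σ) (q₀ : σ)
    (hstart : M.start = {q₀}) (hacc : M.accept = Set.univ)
    (hnil : [] ∈ M.accepts)
    (w : List α) (hw : w ∉ M.accepts)
    (hmin : ∀ v : List α, v.length < w.length → v ∈ M.accepts)
    (M' : NFA (Option α) σ)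
    (hstep : ∀ q a, M'.step q (some a) = M.step q a)
    (hsharp : ∀ q, M'.step q none = {q₀})
    (hstart' : M'.start = {q₀}) (hacc' : M'.accept = Set.univ) :
    M'.accepts ≠ ⊤ ∧
      ∀ v : List (Option α), v.length < w.length → v ∈ M'.accepts :=
  shortest_rejected_word_construction_general M q₀ hstart hacc w hw hmin M' hstep hsharp hstart'
    hacc'
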